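/- arXiv:2402.08991 — 8 statements merged into one kernel-verified Lean document; each statement's English description precedes it below -/
import Mathlib

section
/- Let P and Q be probability measures on a space Z with densities p,q such that ρ = sup_z log(p(z)/q(z)) < ∞. Then ∫ dP(z) log²(dP(z)/dQ(z)) ≤ 2(ρ+1)·KL(P‖Q). -/
/-!
Write `t = log (p / q)`, so that `p = q eᵗ`. The one-variable inequality
`eᵗ t² ≤ 2(ρ+1)(t eᵗ - eᵗ + 1)` holds for `t ≤ 2ρ`: the difference vanishes at `0` and has
derivative `t eᵗ (2ρ - t)`, which has the sign of `t` there. Multiplying by `q` gives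
`p t² ≤ 2(ρ+1)(p t - p + q)` pointwise, and `-p + q` integrates to `0`.
-/

open MeasureTheory Real

lemma hasDerivAt_exp_mul_sq_gap (ρ t : ℝ) :
    HasDerivAt (fun s => 2 * (ρ + 1) * (s * exp s - exp s + 1) - exp s * s ^ 2)
      (t * exp t * (2 * ρ - t)) t := by
  have hexp := hasDerivAt_exp t
  have hmul := (hasDerivAt_id' t).mul hexp
  have hsq : HasDerivAt (fun s : ℝ => s ^ 2) (2 * t) t := by simpa using hasDerivAt_pow 2 t
  have h := (((hmul.sub hexp).add_const 1).const_mul (2 * (ρ + 1))).sub (hexp.mul hsq)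
  exact h.congr_deriv (by ring)

lemma exp_mul_sq_le {ρ t : ℝ} (hρ : 0 ≤ ρ) (ht : t ≤ 2 * ρ) :
    exp t * t ^ 2 ≤ 2 * (ρ + 1) * (t * exp t - exp t + 1) := by
  set F := fun s => 2 * (ρ + 1) * (s * exp s - exp s + 1) - exp s * s ^ 2 with hF
  have hderiv (x : ℝ) : deriv F x = x * exp x * (2 * ρ - x) :=
    (hasDerivAt_exp_mul_sq_gap ρ x).deriv
  have hdiff : Differentiable ℝ F := fun x => (hasDerivAt_exp_mul_sq_gap ρ x).differentiableAt
  have hF0 : F 0 = 0 := by simp [hF]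
  suffices 0 ≤ F t by simpa [hF] using this
  rcases le_total t 0 with hneg | hpos
  · have hanti : AntitoneOn F (Set.Iic 0) := by
      refine antitoneOn_of_deriv_nonpos (convex_Iic 0) hdiff.continuous.continuousOn
        hdiff.differentiableOn fun x hx => ?_
      rw [interior_Iic, Set.mem_Iio] at hx
      rw [hderiv]
      exact mul_nonpos_of_nonpos_of_nonneg
        (mul_nonpos_of_nonpos_of_nonneg hx.le (exp_pos x).le) (by linarith)
    simpa [hF0] using hanti hneg (Set.mem_Iic.2 le_rfl) hneg
  · have hmono : MonotoneOn F (Set.Icc 0 (2 * ρ)) := by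
      refine monotoneOn_of_deriv_nonneg (convex_Icc 0 (2 * ρ)) hdiff.continuous.continuousOn
        hdiff.differentiableOn fun x hx => ?_
      rw [interior_Icc] at hx
      rw [hderiv]
      have : 0 < 2 * ρ - x := by linarith [hx.2]
      have : 0 < x := hx.1
      positivity
    simpa [hF0] using hmono (Set.left_mem_Icc.2 (by linarith)) ⟨hpos, ht⟩ hpos

lemma mul_log_div_sq_le {ρ p q : ℝ} (hρ : 0 ≤ ρ) (hp : 0 < p) (hq : 0 < q)
    (hbound : log (p / q) ≤ 2 * ρ) :
    p * log (p / q) ^ 2 ≤ 2 * (ρ + 1) * (p * log (p / q) - p + q) := by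
  set t := log (p / q)
  have hpq : q * exp t = p := by
    rw [exp_log (div_pos hp hq)]
    field_simp
  calc p * t ^ 2 = q * (exp t * t ^ 2) := by rw [← hpq]; ring
    _ ≤ q * (2 * (ρ + 1) * (t * exp t - exp t + 1)) :=
      mul_le_mul_of_nonneg_left (exp_mul_sq_le hρ hbound) hq.le
    _ = 2 * (ρ + 1) * (q * exp t * t - q * exp t + q) := by ring
    _ = 2 * (ρ + 1) * (p * t - p + q) := by rw [hpq]

theorem stmt_0_general {Z : Type*} [MeasurableSpace Z] (μ : Measure Z)
    (p q : Z → ℝ) (ρ : ℝ) (hρ : 0 < ρ)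
    (hp_pos : ∀ z, 0 < p z) (hq_pos : ∀ z, 0 < q z)
    (hp1 : ∫ z, p z ∂μ = 1) (hq1 : ∫ z, q z ∂μ = 1)
    (hbound : ∀ z, Real.log (p z / q z) ≤ ρ)
    (hint2 : Integrable (fun z => p z * Real.log (p z / q z)) μ) :
    ∫ z, p z * (Real.log (p z / q z))^2 ∂μ
      ≤ 2 * (ρ + 1) * ∫ z, p z * Real.log (p z / q z) ∂μ := by
  have hp_int : Integrable p μ := .of_integral_ne_zero (by simp [hp1])
  have hq_int : Integrable q μ := .of_integral_ne_zero (by simp [hq1])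
  have hKL_int : Integrable (fun z => p z * log (p z / q z) - p z) μ := hint2.sub hp_int
  have hKL : ∫ z, (p z * log (p z / q z) - p z + q z) ∂μ =
      ∫ z, p z * log (p z / q z) ∂μ := by
    rw [integral_add hKL_int hq_int, integral_sub hint2 hp_int, hp1, hq1]
    ring
  calc ∫ z, p z * log (p z / q z) ^ 2 ∂μ
      ≤ ∫ z, 2 * (ρ + 1) * (p z * log (p z / q z) - p z + q z) ∂μ :=
        integral_mono_of_nonneg (.of_forall fun z => by have := hp_pos z; positivity)
          ((hKL_int.add hq_int).const_mul _)
          (.of_forall fun z => mul_log_div_sq_le hρ.le (hp_pos z) (hq_pos z)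
            ((hbound z).trans (by linarith)))
    _ = 2 * (ρ + 1) * ∫ z, p z * log (p z / q z) ∂μ := by rw [integral_const_mul, hKL]

/-- If `ρ = sup_z log(p z / q z)` is finite (bounded above by `ρ`), then
`∫ p log²(p/q) ≤ 2(ρ+1) · KL(P‖Q)` where `KL(P‖Q) = ∫ p log(p/q)`. -/
theorem stmt_0 {Z : Type*} [MeasurableSpace Z] (μ : Measure Z)
    (p q : Z → ℝ) (ρ : ℝ) (hρ : 0 < ρ)
    (hp_pos : ∀ z, 0 < p z) (hq_pos : ∀ z, 0 < q z)
    (hp_meas : Measurable p) (hq_meas : Measurable q)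
    (hp1 : ∫ z, p z ∂μ = 1) (hq1 : ∫ z, q z ∂μ = 1)
    (hbound : ∀ z, Real.log (p z / q z) ≤ ρ)
    (hint1 : Integrable (fun z => p z * (Real.log (p z / q z))^2) μ)
    (hint2 : Integrable (fun z => p z * Real.log (p z / q z)) μ) :
    ∫ z, p z * (Real.log (p z / q z))^2 ∂μ
      ≤ 2 * (ρ + 1) * ∫ z, p z * Real.log (p z / q z) ∂μ :=
  stmt_0_general μ p q ρ hρ hp_pos hq_pos hp1 hq1 hbound hint2
end

section
/- Let f_KL(t) = t log t − t + 1 and f(t) = t log² t for t ≥ 0. Then the function t ↦ f(t)/f_KL(t) is increasing on (0,∞). -/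
open Real

noncomputable def fKL (t : ℝ) : ℝ := t * Real.log t - t + 1

noncomputable def fsq (t : ℝ) : ℝ := t * (Real.log t)^2

/-!
Away from `t = 1` the quotient rule gives
`(fsq / fKL)' = log t * χ t / fKL t ^ 2` with `χ t = (t + 1) log t - 2 (t - 1)`.
Since `χ' = log t + 1/t - 1 ≥ 0` and `χ 1 = 0`, `χ` has the sign of `log`, so the quotient is
monotone on `(0, 1)` and on `(1, ∞)`. The two pieces are glued at the value `2`: the difference
`fsq - 2 fKL` has derivative `log² t ≥ 0` and vanishes at `1`, so the quotient is `≤ 2` to the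
left of `1` and `≥ 2` to the right.
-/

open Set InformationTheory

lemma MonotoneOn.insert_of_le {α β : Type*} [PartialOrder α] [Preorder β] {f : α → β}
    {s : Set α} {c : α} (h : MonotoneOn f s) (hc : c ∈ upperBounds s)
    (hf : ∀ x ∈ s, f x ≤ f c) : MonotoneOn f (insert c s) := by
  rintro x (rfl | hx) y (rfl | hy) hxy
  · exact le_rfl
  · exact (congrArg f (le_antisymm hxy (hc hy))).le
  · exact hf x hx
  · exact h hx hy hxy

lemma MonotoneOn.insert_of_ge {α β : Type*} [PartialOrder α] [Preorder β] {f : α → β}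
    {s : Set α} {c : α} (h : MonotoneOn f s) (hc : c ∈ lowerBounds s)
    (hf : ∀ x ∈ s, f c ≤ f x) : MonotoneOn f (insert c s) := by
  rintro x (rfl | hx) y (rfl | hy) hxy
  · exact le_rfl
  · exact hf y hy
  · exact (congrArg f (le_antisymm hxy (hc hx))).le
  · exact h hx hy hxy

lemma monotoneOn_of_hasDerivAt_nonneg_of_isOpen {D : Set ℝ} (hD : Convex ℝ D) (hDo : IsOpen D)
    {f f' : ℝ → ℝ} (hf : ∀ x ∈ D, HasDerivAt f (f' x) x) (hf' : ∀ x ∈ D, 0 ≤ f' x) :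
    MonotoneOn f D := by
  refine monotoneOn_of_hasDerivWithinAt_nonneg (f' := f') hD
    (fun x hx ↦ (hf x hx).continuousAt.continuousWithinAt) (fun x hx ↦ ?_) ?_
  · rw [hDo.interior_eq] at hx ⊢
    exact (hf x hx).hasDerivWithinAt
  · rwa [hDo.interior_eq]

lemma fKL_eq_klFun (t : ℝ) : fKL t = klFun t := by
  rw [fKL, klFun_apply]
  ring

lemma fKL_pos {t : ℝ} (ht : 0 ≤ t) (h1 : t ≠ 1) : 0 < fKL t := by
  rw [fKL_eq_klFun]
  exact (klFun_nonneg ht).lt_of_ne' (mt (klFun_eq_zero_iff ht).1 h1)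

lemma fKL_one : fKL 1 = 0 := by simp [fKL]

lemma fsq_one : fsq 1 = 0 := by simp [fsq]

lemma hasDerivAt_fKL {t : ℝ} (ht : t ≠ 0) : HasDerivAt fKL (log t) t := by
  simpa only [funext fKL_eq_klFun] using hasDerivAt_klFun ht

lemma hasDerivAt_fsq {t : ℝ} (ht : t ≠ 0) : HasDerivAt fsq (log t ^ 2 + 2 * log t) t := by
  refine ((hasDerivAt_id t).mul ((hasDerivAt_log ht).pow 2)).congr_deriv ?_
  simp only [id, Pi.pow_apply]
  field_simp
  ring

noncomputable def chi (t : ℝ) : ℝ := (t + 1) * log t - 2 * (t - 1)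

lemma hasDerivAt_chi {t : ℝ} (ht : t ≠ 0) : HasDerivAt chi (log t + t⁻¹ - 1) t := by
  refine ((((hasDerivAt_id t).add_const 1).mul (hasDerivAt_log ht)).sub
    (((hasDerivAt_id t).sub_const 1).const_mul 2)).congr_deriv ?_
  simp only [id]
  field_simp
  ring

lemma monotoneOn_chi : MonotoneOn chi (Ioi 0) :=
  monotoneOn_of_hasDerivAt_nonneg_of_isOpen (convex_Ioi 0) isOpen_Ioi
    (fun _ hx ↦ hasDerivAt_chi (ne_of_gt hx))
    (fun x hx ↦ by linarith [one_sub_inv_le_log_of_pos (mem_Ioi.1 hx)])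

lemma log_mul_chi_nonneg {t : ℝ} (ht : 0 < t) : 0 ≤ log t * chi t := by
  have hchi1 : chi 1 = 0 := by simp [chi]
  rcases le_total t 1 with h | h
  · exact mul_nonneg_of_nonpos_of_nonpos (log_nonpos ht.le h)
      (hchi1 ▸ monotoneOn_chi ht (mem_Ioi.2 one_pos) h)
  · exact mul_nonneg (log_nonneg h) (hchi1 ▸ monotoneOn_chi (mem_Ioi.2 one_pos) ht h)

lemma hasDerivAt_fsq_div_fKL {t : ℝ} (ht : 0 < t) (h1 : t ≠ 1) :
    HasDerivAt (fun t ↦ fsq t / fKL t) (log t * chi t / fKL t ^ 2) t := by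
  refine ((hasDerivAt_fsq ht.ne').div (hasDerivAt_fKL ht.ne') (fKL_pos ht.le h1).ne')
    |>.congr_deriv ?_
  simp only [fsq, fKL, chi]
  ring

lemma monotoneOn_fsq_div_fKL {D : Set ℝ} (hD : Convex ℝ D) (hDo : IsOpen D)
    (hD0 : D ⊆ Ioi 0) (hD1 : 1 ∉ D) : MonotoneOn (fun t ↦ fsq t / fKL t) D :=
  monotoneOn_of_hasDerivAt_nonneg_of_isOpen hD hDo
    (fun _ hx ↦ hasDerivAt_fsq_div_fKL (hD0 hx) (ne_of_mem_of_not_mem hx hD1))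
    (fun _ hx ↦ div_nonneg (log_mul_chi_nonneg (hD0 hx)) (sq_nonneg _))

lemma monotoneOn_fsq_sub_two_mul_fKL : MonotoneOn (fun t ↦ fsq t - 2 * fKL t) (Ioi 0) :=
  monotoneOn_of_hasDerivAt_nonneg_of_isOpen (convex_Ioi 0) isOpen_Ioi
    (fun x hx ↦ by
      refine ((hasDerivAt_fsq (ne_of_gt hx)).sub
        ((hasDerivAt_fKL (ne_of_gt hx)).const_mul 2)).congr_deriv ?_
      ring)
    (fun x _ ↦ sq_nonneg (log x))

lemma fsq_div_fKL_le_two {t : ℝ} (ht : 0 < t) (h1 : t < 1) : fsq t / fKL t ≤ 2 := by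
  have h := monotoneOn_fsq_sub_two_mul_fKL ht (mem_Ioi.2 one_pos) h1.le
  rw [div_le_iff₀ (fKL_pos ht.le h1.ne)]
  linarith [fsq_one, fKL_one]

lemma two_le_fsq_div_fKL {t : ℝ} (h1 : 1 < t) : 2 ≤ fsq t / fKL t := by
  have h := monotoneOn_fsq_sub_two_mul_fKL (mem_Ioi.2 one_pos) (mem_Ioi.2 (one_pos.trans h1))
    h1.le
  rw [le_div_iff₀ (fKL_pos (zero_le_one.trans h1.le) h1.ne')]
  linarith [fsq_one, fKL_one]

/-- The ratio `t ↦ f(t)/f_KL(t)` (continuously extended by the value `2` at `t = 1`)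
is increasing on `(0, ∞)`. -/
theorem stmt_1 :
    MonotoneOn (fun t : ℝ => if t = 1 then 2 else fsq t / fKL t) (Set.Ioi (0 : ℝ)) := by
  set F := fun t : ℝ => if t = 1 then 2 else fsq t / fKL t
  have hF : ∀ t ≠ 1, F t = fsq t / fKL t := fun t ht ↦ if_neg ht
  have hF1 : F 1 = 2 := if_pos rfl
  have hleft : MonotoneOn F (Ioo 0 1) :=
    (monotoneOn_fsq_div_fKL (convex_Ioo 0 1) isOpen_Ioo (fun _ hx ↦ hx.1) fun h ↦ h.2.false)
      |>.congr fun x hx ↦ (hF x hx.2.ne).symm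
  have hright : MonotoneOn F (Ioi 1) :=
    (monotoneOn_fsq_div_fKL (convex_Ioi 1) isOpen_Ioi
      (fun _ hx ↦ mem_Ioi.2 (zero_lt_one.trans hx)) (lt_irrefl (1 : ℝ)))
      |>.congr fun x hx ↦ (hF x (ne_of_gt hx)).symm
  have hIoc : MonotoneOn F (Ioc 0 1) := Ioo_insert_right (zero_lt_one' ℝ) ▸
    hleft.insert_of_le (fun _ hx ↦ hx.2.le) fun x hx ↦
      hF x hx.2.ne ▸ hF1 ▸ fsq_div_fKL_le_two hx.1 hx.2
  have hIci : MonotoneOn F (Ici 1) := Ioi_insert (a := (1 : ℝ)) ▸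
    hright.insert_of_ge (fun _ hx ↦ hx.le) fun x hx ↦
      hF x (ne_of_gt hx) ▸ hF1 ▸ two_le_fsq_div_fKL hx
  rw [← Ioc_union_Ici_eq_Ioi (zero_lt_one' ℝ)]
  exact hIoc.union_right hIci (isGreatest_Ioc zero_lt_one) isLeast_Ici
end

section
/- For any ρ > 0, (ρ² e^ρ)/(ρ e^ρ − e^ρ + 1) ≤ 2 + 2ρ. -/
open Real

/-! Clearing the (positive) denominator, the inequality becomes `e^ρ (ρ² - 2) + 2 + 2ρ ≥ 0`,
i.e. `ρ² - 2 + (2 + 2ρ) e^{-ρ} ≥ 0`. The left side vanishes at `0` and its derivative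
`2ρ (1 - e^{-ρ})` is nonnegative for `ρ ≥ 0`. -/

lemma hasDerivAt_sq_sub_two_add_mul_exp_neg (x : ℝ) :
    HasDerivAt (fun x => x ^ 2 - 2 + (2 + 2 * x) * exp (-x)) (2 * x * (1 - exp (-x))) x := by
  have hexp : HasDerivAt (fun x => exp (-x)) (-exp (-x)) x := by
    simpa using (hasDerivAt_neg x).exp
  have hlin : HasDerivAt (fun x : ℝ => 2 + 2 * x) 2 x := by
    simpa using ((hasDerivAt_id x).const_mul 2).const_add 2
  refine (((hasDerivAt_pow 2 x).sub_const 2).add (hlin.mul hexp)).congr_deriv ?_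
  norm_num
  ring

lemma sq_sub_two_add_mul_exp_neg_nonneg {x : ℝ} (hx : 0 ≤ x) :
    0 ≤ x ^ 2 - 2 + (2 + 2 * x) * exp (-x) := by
  set f : ℝ → ℝ := fun x => x ^ 2 - 2 + (2 + 2 * x) * exp (-x)
  have hf : MonotoneOn f (Set.Ici 0) := by
    refine monotoneOn_of_deriv_nonneg (convex_Ici 0)
      (fun y _ => (hasDerivAt_sq_sub_two_add_mul_exp_neg y).continuousAt.continuousWithinAt)
      (fun y _ => (hasDerivAt_sq_sub_two_add_mul_exp_neg y).differentiableAt.differentiableWithinAt)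
      fun y hy => ?_
    rw [interior_Ici] at hy
    rw [(hasDerivAt_sq_sub_two_add_mul_exp_neg y).deriv]
    have hexp : exp (-y) ≤ 1 := exp_le_one_iff.mpr (by linarith [hy.out])
    nlinarith [hy.out]
  simpa [f] using hf Set.self_mem_Ici hx hx

lemma mul_exp_sub_exp_add_one_pos {x : ℝ} (hx : 0 < x) : 0 < x * exp x - exp x + 1 := by
  have h : 1 - x < exp (-x) := by linarith [add_one_lt_exp (neg_ne_zero.mpr hx.ne')]
  have := mul_lt_mul_of_pos_right h (exp_pos x)
  rw [← exp_add, neg_add_cancel, exp_zero] at this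
  linarith

/-- For any `ρ > 0`, `(ρ² e^ρ)/(ρ e^ρ − e^ρ + 1) ≤ 2 + 2ρ`. -/
theorem stmt_2 (ρ : ℝ) (hρ : 0 < ρ) :
    ρ^2 * Real.exp ρ / (ρ * Real.exp ρ - Real.exp ρ + 1) ≤ 2 + 2 * ρ := by
  rw [div_le_iff₀ (mul_exp_sub_exp_add_one_pos hρ)]
  have key := mul_nonneg (exp_pos ρ).le (sq_sub_two_add_mul_exp_neg_nonneg hρ.le)
  have hinv : exp ρ * exp (-ρ) = 1 := by rw [← exp_add, add_neg_cancel, exp_zero]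
  linear_combination key + (2 + 2 * ρ) * hinv
end

section
/- Let P, Q be probability measures with bounded log-density ratio ρ = sup_z log(p(z)/q(z)). Then H(P‖Q)² ≤ KL(P‖Q) ≤ (3+ρ) H(P‖Q)², where H(P‖Q)² = E_{z∼P}(√(dQ/dP)−1)² is the squared Hellinger distance. -/
open MeasureTheory Real

lemma key1' (s : ℝ) (hs : 0 < s) : (s - 1)^2 + 2 * Real.log s ≤ s^2 - 1 := by
  have h1 : Real.log s ≤ s - 1 := Real.log_le_sub_one_of_pos hs
  nlinarith

lemma key2' (s ρ : ℝ) (hs : 0 < s) (hρ : 0 ≤ ρ) (h : -(2 * Real.log s) ≤ ρ) :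
    s^2 - 1 - 2 * Real.log s ≤ (3 + ρ) * (s - 1)^2 := by
  have h1 : Real.log s ≤ s - 1 := Real.log_le_sub_one_of_pos hs
  have h2 : Real.log s⁻¹ ≤ s⁻¹ - 1 := Real.log_le_sub_one_of_pos (inv_pos.mpr hs)
  rw [Real.log_inv] at h2
  have h3 : s - 1 ≤ s * Real.log s := by
    have := mul_le_mul_of_nonneg_left h2 hs.le
    rw [mul_sub, mul_inv_cancel₀ hs.ne'] at this
    nlinarith
  rcases le_total 1 s with hs1 | hs1
  · nlinarith [mul_nonneg hρ (sq_nonneg (s-1)), mul_nonneg (mul_nonneg (sub_nonneg.2 hs1) (sub_nonneg.2 hs1)) (sub_nonneg.2 hs1), mul_pos hs hs, h3]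
  · have e1 : 0 ≤ (2 - s) * (s * Real.log s - (s - 1)) := mul_nonneg (by linarith) (by linarith)
    have e2 : 0 ≤ (ρ + 2 * Real.log s) * (s - 1)^2 := mul_nonneg (by linarith) (sq_nonneg _)
    nlinarith [e1, e2]

/-- For probability densities `p, q` with bounded log-density ratio `ρ`,
`H(P‖Q)² ≤ KL(P‖Q) ≤ (3+ρ) H(P‖Q)²`, where
`H(P‖Q)² = ∫ p (√(q/p) − 1)²` and `KL(P‖Q) = ∫ p log(p/q)`. -/
theorem stmt_3 {Z : Type*} [MeasurableSpace Z] (μ : Measure Z)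
    (p q : Z → ℝ) (ρ : ℝ)
    (hp_pos : ∀ z, 0 < p z) (hq_pos : ∀ z, 0 < q z)
    (hp_meas : Measurable p) (hq_meas : Measurable q)
    (hp1 : ∫ z, p z ∂μ = 1) (hq1 : ∫ z, q z ∂μ = 1)
    (hbound : ∀ z, Real.log (p z / q z) ≤ ρ)
    (hH : Integrable (fun z => p z * (Real.sqrt (q z / p z) - 1)^2) μ)
    (hKL : Integrable (fun z => p z * Real.log (p z / q z)) μ) :
    ∫ z, p z * (Real.sqrt (q z / p z) - 1)^2 ∂μ
      ≤ ∫ z, p z * Real.log (p z / q z) ∂μ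
    ∧ ∫ z, p z * Real.log (p z / q z) ∂μ
      ≤ (3 + ρ) * ∫ z, p z * (Real.sqrt (q z / p z) - 1)^2 ∂μ := by
  have hp_int : Integrable p μ := by
    by_contra h; rw [integral_undef h] at hp1; norm_num at hp1
  have hq_int : Integrable q μ := by
    by_contra h; rw [integral_undef h] at hq1; norm_num at hq1
  -- basic facts about s z = √(q z / p z)
  have hs_pos : ∀ z, 0 < Real.sqrt (q z / p z) := fun z =>
    Real.sqrt_pos.mpr (div_pos (hq_pos z) (hp_pos z))
  have hs_sq : ∀ z, (Real.sqrt (q z / p z))^2 = q z / p z := fun z =>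
    Real.sq_sqrt (le_of_lt (div_pos (hq_pos z) (hp_pos z)))
  have hlog : ∀ z, Real.log (p z / q z) = -(2 * Real.log (Real.sqrt (q z / p z))) := by
    intro z
    rw [Real.log_sqrt (le_of_lt (div_pos (hq_pos z) (hp_pos z)))]
    rw [Real.log_div (hp_pos z).ne' (hq_pos z).ne', Real.log_div (hq_pos z).ne' (hp_pos z).ne']
    ring
  -- ρ ≥ 0
  have hρ0 : 0 ≤ ρ := by
    by_contra hc
    push_neg at hc
    have hle : ∀ z, p z ≤ Real.exp ρ * q z := by
      intro z
      have h2 : p z / q z ≤ Real.exp ρ := by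
        calc p z / q z = Real.exp (Real.log (p z / q z)) :=
              (Real.exp_log (div_pos (hp_pos z) (hq_pos z))).symm
          _ ≤ Real.exp ρ := Real.exp_le_exp.mpr (hbound z)
      calc p z = (p z / q z) * q z := by
              rw [div_mul_cancel₀ _ (hq_pos z).ne']
        _ ≤ Real.exp ρ * q z := mul_le_mul_of_nonneg_right h2 (hq_pos z).le
    have hint : (1:ℝ) ≤ Real.exp ρ := by
      calc (1:ℝ) = ∫ z, p z ∂μ := hp1.symm
        _ ≤ ∫ z, Real.exp ρ * q z ∂μ := integral_mono hp_int (hq_int.const_mul _) hle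
        _ = Real.exp ρ * 1 := by rw [integral_const_mul, hq1]
        _ = Real.exp ρ := mul_one _
    have := Real.exp_lt_one_iff.mpr hc
    linarith
  -- pointwise inequality 1
  have pw1 : ∀ z, p z * (Real.sqrt (q z / p z) - 1)^2
      ≤ p z * Real.log (p z / q z) + (q z - p z) := by
    intro z
    set s := Real.sqrt (q z / p z) with hsdef
    have key := key1' s (hs_pos z)
    have hmul := mul_le_mul_of_nonneg_left key (hp_pos z).le
    have hps : p z * (s^2) = q z := by
      rw [hsdef, hs_sq z, mul_comm, div_mul_cancel₀ _ (hp_pos z).ne']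
    rw [hlog z]
    nlinarith [hmul, hps]
  -- pointwise inequality 2
  have pw2 : ∀ z, (q z - p z) + p z * Real.log (p z / q z)
      ≤ (3 + ρ) * (p z * (Real.sqrt (q z / p z) - 1)^2) := by
    intro z
    set s := Real.sqrt (q z / p z) with hsdef
    have hbz : -(2 * Real.log s) ≤ ρ := by rw [← hlog z]; exact hbound z
    have key := key2' s ρ (hs_pos z) hρ0 hbz
    have hmul := mul_le_mul_of_nonneg_left key (hp_pos z).le
    have hps : p z * (s^2) = q z := by
      rw [hsdef, hs_sq z, mul_comm, div_mul_cancel₀ _ (hp_pos z).ne']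
    rw [hlog z]
    nlinarith [hmul, hps]
  -- the combined integrand is integrable
  have hqp : Integrable (fun z => q z - p z) μ := hq_int.sub hp_int
  have hint2 : Integrable (fun z => p z * Real.log (p z / q z) + (q z - p z)) μ :=
    hKL.add hqp
  have hint3 : Integrable (fun z => (q z - p z) + p z * Real.log (p z / q z)) μ :=
    hqp.add hKL
  have hsum : ∫ z, (p z * Real.log (p z / q z) + (q z - p z)) ∂μ
      = ∫ z, p z * Real.log (p z / q z) ∂μ := by
    rw [integral_add hKL hqp, integral_sub hq_int hp_int, hp1, hq1]
    ring
  constructor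
  · calc ∫ z, p z * (Real.sqrt (q z / p z) - 1)^2 ∂μ
        ≤ ∫ z, (p z * Real.log (p z / q z) + (q z - p z)) ∂μ :=
          integral_mono hH hint2 pw1
      _ = ∫ z, p z * Real.log (p z / q z) ∂μ := hsum
  · calc ∫ z, p z * Real.log (p z / q z) ∂μ
        = ∫ z, (p z * Real.log (p z / q z) + (q z - p z)) ∂μ := hsum.symm
      _ = ∫ z, ((q z - p z) + p z * Real.log (p z / q z)) ∂μ := by
          congr 1; ext z; ring
      _ ≤ ∫ z, (3 + ρ) * (p z * (Real.sqrt (q z / p z) - 1)^2) ∂μ :=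
          integral_mono hint3 (hH.const_mul _) pw2
      _ = (3 + ρ) * ∫ z, p z * (Real.sqrt (q z / p z) - 1)^2 ∂μ := integral_const_mul _ _
end

section
/- Let {x_i}_{i∈[T]} be vectors in ℝ^d, let Λ₀ be a positive-definite matrix, and Λ_t = Λ₀ + ∑_{i=1}^t x_i x_iᵀ. Then ∑_{i=1}^T ‖x_i‖²_{Λ_{i-1}^{-1}} ≥ log(det(Λ_T)/det(Λ₀)). -/
/-!
By the matrix determinant lemma, each rank-one update `Λ (i + 1) = Λ i + x i x iᵀ` multiplies
the determinant by `1 + ‖x i‖²_{(Λ i)⁻¹}`, and `log (1 + q) ≤ q`; summing over `i` telescopes.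
-/

open Matrix Real

theorem Matrix.det_add_vecMulVec {n α : Type*} [Fintype n] [DecidableEq n] [CommRing α]
    {A : Matrix n n α} (hA : IsUnit A.det) (u v : n → α) :
    (A + vecMulVec u v).det = A.det * (1 + v ⬝ᵥ A⁻¹ *ᵥ u) := by
  rw [vecMulVec_eq Unit, det_add_replicateCol_mul_replicateRow hA, ← replicateRow_vecMul,
    det_unique (1 + _), add_apply, one_apply_eq, replicateRow_mul_replicateCol_apply,
    dotProduct_mulVec]

theorem Matrix.PosDef.log_det_add_vecMulVec_self_le {n : Type*} [Fintype n] [DecidableEq n]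
    {A : Matrix n n ℝ} (hA : A.PosDef) (u : n → ℝ) :
    log (A + vecMulVec u u).det ≤ log A.det + u ⬝ᵥ A⁻¹ *ᵥ u := by
  have hq : 0 ≤ u ⬝ᵥ A⁻¹ *ᵥ u := hA.inv.posSemidef.dotProduct_mulVec_nonneg u
  rw [det_add_vecMulVec hA.det_pos.ne'.isUnit u u, log_mul hA.det_pos.ne' (by positivity)]
  linarith [log_le_sub_one_of_pos (x := 1 + u ⬝ᵥ A⁻¹ *ᵥ u) (by positivity)]

/-- Elliptical potential: with `Λ t = Λ₀ + ∑_{i<t} x i x iᵀ` and `Λ₀` positive-definite,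
`∑_{i<T} ‖x i‖²_{(Λ i)⁻¹} ≥ log (det (Λ T) / det Λ₀)`. -/
theorem stmt_7 {d : ℕ} (T : ℕ) (x : ℕ → Fin d → ℝ)
    (Λ₀ : Matrix (Fin d) (Fin d) ℝ) (hΛ₀ : Λ₀.PosDef)
    (Λ : ℕ → Matrix (Fin d) (Fin d) ℝ)
    (hΛ : ∀ t, Λ t = Λ₀ + ∑ i ∈ Finset.range t, vecMulVec (x i) (x i)) :
    Real.log ((Λ T).det / Λ₀.det)
      ≤ ∑ i ∈ Finset.range T, x i ⬝ᵥ ((Λ i)⁻¹).mulVec (x i) := by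
  have hzero : Λ 0 = Λ₀ := by simp [hΛ]
  have hsucc (t : ℕ) : Λ (t + 1) = Λ t + vecMulVec (x t) (x t) := by
    rw [hΛ, hΛ, Finset.sum_range_succ, add_assoc]
  have hpos (t : ℕ) : (Λ t).PosDef := by
    induction t with
    | zero => rwa [hzero]
    | succ t ih =>
      simpa only [hsucc, star_trivial] using ih.add_posSemidef (posSemidef_vecMulVec_self_star (x t))
  rw [log_div (hpos T).det_pos.ne' hΛ₀.det_pos.ne', sub_le_iff_le_add', ← hzero]
  induction T with
  | zero => simp
  | succ T ih =>
    rw [hsucc, Finset.sum_range_succ, ← add_assoc]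
    exact ((hpos T).log_det_add_vecMulVec_self_le (x T)).trans (by linarith [ih])
end

section
/- Let {x_i}_{i∈[T]} be vectors in ℝ^d with ‖x_i‖₂ ≤ L, let Λ₀ be positive-definite, and Λ_t = Λ₀ + ∑_{i=1}^t x_i x_iᵀ. Then ∑_{i=1}^T min{1, ‖x_i‖²_{Λ_{i-1}^{-1}}} ≤ 2d·log((trace(Λ₀) + T L²)/(d·det(Λ₀)^{1/d})). -/
open Matrix Real

/-! By the matrix determinant lemma, `det Λ_{i+1} = det Λ_i · (1 + ‖x_i‖²_{Λ_i⁻¹})`, so the sum of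
`log (1 + ‖x_i‖²_{Λ_i⁻¹})` telescopes to `log (det Λ_T / det Λ₀)`, and `min 1 u ≤ 2 log (1 + u)`
bounds the left-hand side by twice this. Jensen's inequality for `log` on the eigenvalues of `Λ_T`
gives `log det Λ_T ≤ d log (trace Λ_T / d)`, and `trace Λ_T = trace Λ₀ + ∑ ‖x_i‖² ≤ trace Λ₀ + T L²`.
-/

lemma min_one_le_two_mul_log_one_add {u : ℝ} (hu : 0 ≤ u) : min 1 u ≤ 2 * log (1 + u) := by
  have h1u : 0 < 1 + u := by linarith
  have hlog : u / (1 + u) ≤ log (1 + u) := by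
    have := one_sub_inv_le_log_of_pos h1u
    rwa [← one_div, one_sub_div h1u.ne', add_sub_cancel_left] at this
  have : min 1 u ≤ 2 * (u / (1 + u)) := by
    rw [mul_div_assoc', le_div_iff₀ h1u]
    rcases le_total u 1 with h | h
    · rw [min_eq_right h]; nlinarith
    · rw [min_eq_left h]; linarith
  linarith

namespace Matrix

variable {n : Type*} [Fintype n]

theorem det_add_vecMulVec_s8 [DecidableEq n] {R : Type*} [CommRing R] {A : Matrix n n R}
    (hA : IsUnit A.det) (u v : n → R) :
    (A + vecMulVec u v).det = A.det * (1 + v ⬝ᵥ A⁻¹ *ᵥ u) := by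
  rw [vecMulVec_eq Unit, det_add_replicateCol_mul_replicateRow hA, det_unique (n := Unit)]
  simp only [PUnit.default_eq_unit, add_apply, one_apply_eq, Matrix.mul_apply, replicateRow_apply,
    replicateCol_apply, Finset.sum_mul, mul_assoc, dotProduct, mulVec, Finset.mul_sum]
  rw [Finset.sum_comm]

theorem PosDef.add_sum_vecMulVec_self {ι : Type*} {A : Matrix n n ℝ} (hA : A.PosDef)
    (s : Finset ι) (x : ι → n → ℝ) : (A + ∑ i ∈ s, vecMulVec (x i) (x i)).PosDef :=
  hA.add_posSemidef <| posSemidef_sum s fun i _ => by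
    simpa using posSemidef_vecMulVec_self_star (x i)

theorem PosDef.log_det_le [DecidableEq n] {A : Matrix n n ℝ} (hA : A.PosDef) :
    log A.det ≤ Fintype.card n * log (A.trace / Fintype.card n) := by
  rcases isEmpty_or_nonempty n with hn | hn
  · simp
  have hcard : (0 : ℝ) < Fintype.card n := by exact_mod_cast Fintype.card_pos
  have jensen := strictConcaveOn_log_Ioi.concaveOn.le_map_sum (t := Finset.univ)
    (w := fun _ => (Fintype.card n : ℝ)⁻¹) (p := hA.isHermitian.eigenvalues)
    (fun _ _ => by positivity) (by simp [Finset.card_univ])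
    (fun i _ => hA.eigenvalues_pos i)
  rw [hA.isHermitian.det_eq_prod_eigenvalues, hA.isHermitian.trace_eq_sum_eigenvalues]
  simp only [smul_eq_mul, ← Finset.mul_sum] at jensen
  simp only [RCLike.ofReal_real_eq_id, id]
  rw [log_prod fun i _ => (hA.eigenvalues_pos i).ne', div_eq_inv_mul]
  rwa [← inv_mul_le_iff₀ hcard]

theorem PosDef.dotProduct_inv_mulVec_self_nonneg [DecidableEq n] {A : Matrix n n ℝ}
    (hA : A.PosDef) (v : n → ℝ) : 0 ≤ v ⬝ᵥ A⁻¹ *ᵥ v := by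
  simpa using hA.inv.posSemidef.dotProduct_mulVec_nonneg v

variable {Λ₀ : Matrix n n ℝ} {x : ℕ → n → ℝ} {Λ : ℕ → Matrix n n ℝ}

theorem log_det_eq_add_sum_log_one_add [DecidableEq n] (hΛ₀ : Λ₀.PosDef)
    (hΛ : ∀ t, Λ t = Λ₀ + ∑ i ∈ Finset.range t, vecMulVec (x i) (x i)) (t : ℕ) :
    log (Λ t).det = log Λ₀.det + ∑ i ∈ Finset.range t, log (1 + x i ⬝ᵥ (Λ i)⁻¹ *ᵥ x i) := by
  induction t with
  | zero => simp [hΛ 0]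
  | succ t ih =>
    have hPD : (Λ t).PosDef := hΛ t ▸ hΛ₀.add_sum_vecMulVec_self _ x
    have hstep : Λ (t + 1) = Λ t + vecMulVec (x t) (x t) := by
      rw [hΛ, hΛ, Finset.sum_range_succ, add_assoc]
    have hquad := hPD.dotProduct_inv_mulVec_self_nonneg (x t)
    rw [hstep, det_add_vecMulVec_s8 hPD.det_pos.ne'.isUnit, log_mul hPD.det_pos.ne' (by positivity),
      ih, Finset.sum_range_succ, add_assoc]

theorem sum_min_one_le_two_mul_log_det_sub [DecidableEq n] (hΛ₀ : Λ₀.PosDef)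
    (hΛ : ∀ t, Λ t = Λ₀ + ∑ i ∈ Finset.range t, vecMulVec (x i) (x i)) (T : ℕ) :
    ∑ i ∈ Finset.range T, min 1 (x i ⬝ᵥ (Λ i)⁻¹ *ᵥ x i) ≤ 2 * (log (Λ T).det - log Λ₀.det) := by
  rw [log_det_eq_add_sum_log_one_add hΛ₀ hΛ, add_sub_cancel_left, Finset.mul_sum]
  exact Finset.sum_le_sum fun i _ => min_one_le_two_mul_log_one_add <|
    (hΛ i ▸ hΛ₀.add_sum_vecMulVec_self _ x).dotProduct_inv_mulVec_self_nonneg (x i)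

end Matrix

/-- Truncated elliptical potential lemma: if `‖x i‖₂ ≤ L` and `Λ₀` is positive-definite, then
`∑_{i<T} min{1, ‖x i‖²_{(Λ i)⁻¹}} ≤ 2 d log((trace Λ₀ + T L²)/(d · det(Λ₀)^{1/d}))`. -/
theorem stmt_8 {d : ℕ} (hd : 0 < d) (T : ℕ) (L : ℝ) (x : ℕ → Fin d → ℝ)
    (hx : ∀ i, Real.sqrt (∑ j, (x i j)^2) ≤ L)
    (Λ₀ : Matrix (Fin d) (Fin d) ℝ) (hΛ₀ : Λ₀.PosDef)
    (Λ : ℕ → Matrix (Fin d) (Fin d) ℝ)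
    (hΛ : ∀ t, Λ t = Λ₀ + ∑ i ∈ Finset.range t, vecMulVec (x i) (x i)) :
    ∑ i ∈ Finset.range T, min 1 (x i ⬝ᵥ ((Λ i)⁻¹).mulVec (x i))
      ≤ 2 * d * Real.log ((Λ₀.trace + T * L^2) / (d * Λ₀.det ^ ((1:ℝ)/d))) := by
  have hdR : (0 : ℝ) < d := Nat.cast_pos.mpr hd
  have hnorm_sq : ∀ i, x i ⬝ᵥ x i ≤ L ^ 2 := fun i => by
    have hs : 0 ≤ ∑ j, x i j ^ 2 := by positivity
    simpa [dotProduct, ← sq, sq_sqrt hs] using pow_le_pow_left₀ (sqrt_nonneg _) (hx i) 2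
  have htrace : (Λ T).trace ≤ Λ₀.trace + T * L ^ 2 := by
    rw [hΛ, trace_add, trace_sum]
    simpa [trace_vecMulVec] using Finset.sum_le_sum fun i (_ : i ∈ Finset.range T) => hnorm_sq i
  have hΛT : (Λ T).PosDef := hΛ T ▸ hΛ₀.add_sum_vecMulVec_self _ x
  have : Nonempty (Fin d) := ⟨⟨0, hd⟩⟩
  have hlogdet : log (Λ T).det ≤ d * log ((Λ₀.trace + T * L ^ 2) / d) := by
    calc log (Λ T).det ≤ d * log ((Λ T).trace / d) := by simpa using hΛT.log_det_le
      _ ≤ d * log ((Λ₀.trace + T * L ^ 2) / d) := by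
        gcongr
        exact div_pos hΛT.trace_pos hdR
  have hc : 0 < Λ₀.trace + T * L ^ 2 := hΛT.trace_pos.trans_le htrace
  have hdet := hΛ₀.det_pos
  have hrhs : 2 * d * log ((Λ₀.trace + T * L ^ 2) / (d * Λ₀.det ^ ((1 : ℝ) / d)))
      = 2 * (d * log ((Λ₀.trace + T * L ^ 2) / d) - log Λ₀.det) := by
    rw [log_div hc.ne' (by positivity), log_mul hdR.ne' (by positivity), log_rpow hdet,
      log_div hc.ne' hdR.ne']
    field_simp
    ring
  rw [hrhs]
  linarith [sum_min_one_le_two_mul_log_det_sub hΛ₀ hΛ T]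
end

section
/- Let n, S, A be positive integers and ε ∈ (0,1). If n ≤ 8SA·log(1 + n/ε²), then n ≤ 48SA·log(1 + 8SA/ε²). -/
open Real

/-- Self-bounding inequality: if `n ≤ 8SA log(1 + n/ε²)` with `ε ∈ (0,1)`,
then `n ≤ 48SA log(1 + 8SA/ε²)`. -/
theorem stmt_14 (n S A : ℕ) (hn : 0 < n) (hS : 0 < S) (hA : 0 < A)
    (ε : ℝ) (hε0 : 0 < ε) (hε1 : ε < 1)
    (h : (n : ℝ) ≤ 8 * S * A * Real.log (1 + n / ε^2)) :
    (n : ℝ) ≤ 48 * S * A * Real.log (1 + 8 * S * A / ε^2) := by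
  set c : ℝ := 8 * S * A with hc_def
  have hS1 : (1:ℝ) ≤ S := by exact_mod_cast hS
  have hA1 : (1:ℝ) ≤ A := by exact_mod_cast hA
  have hn1 : (1:ℝ) ≤ n := by exact_mod_cast hn
  have hc8 : (8:ℝ) ≤ c := by nlinarith
  have hc0 : (0:ℝ) < c := by linarith
  have hε2 : (0:ℝ) < ε^2 := by positivity
  have hε2le : ε^2 ≤ 1 := by nlinarith
  have hcdiv : c ≤ c / ε^2 := by
    rw [le_div_iff₀ hε2]; nlinarith
  set L : ℝ := Real.log (1 + c / ε^2) with hL_def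
  have h9 : (9:ℝ) ≤ 1 + c / ε^2 := by linarith
  have hL2 : (2:ℝ) ≤ L := by
    have h1 : Real.exp 2 ≤ 9 := by
      have := Real.exp_one_lt_d9
      have h2 : Real.exp 2 = Real.exp 1 * Real.exp 1 := by
        rw [← Real.exp_add]; norm_num
      nlinarith [Real.exp_pos 1]
    have := Real.log_le_log (by positivity : (0:ℝ) < Real.exp 2) (le_trans h1 h9)
    rwa [Real.log_exp] at this
  -- log(1 + n/ε²) ≤ log(1+n) + L
  have hmul : (1:ℝ) + n / ε^2 ≤ (1 + n) * (1 + c / ε^2) := by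
    have hnd : (0:ℝ) ≤ (n:ℝ) / ε^2 := by positivity
    have : (n:ℝ) / ε^2 ≤ ((n:ℝ) * c) / ε^2 := by
      gcongr
      nlinarith
    have hd : (0:ℝ) ≤ c / ε^2 := by positivity
    have hexp : (1 + (n:ℝ)) * (1 + c / ε^2) = 1 + n + c/ε^2 + n*c/ε^2 := by
      field_simp; ring
    rw [hexp]; linarith
  have hlog1 : Real.log (1 + n / ε^2) ≤ Real.log (1 + n) + L := by
    have h1 : Real.log (1 + n / ε^2) ≤ Real.log ((1 + n) * (1 + c / ε^2)) :=
      Real.log_le_log (by positivity) hmul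
    rwa [Real.log_mul (by positivity) (by positivity)] at h1
  -- log(1+n) ≤ (1+n)/(4c) + log(4c) - 1
  have hlog2 : Real.log (1 + n) ≤ (1 + n) / (4 * c) + Real.log (4 * c) - 1 := by
    have hx : (0:ℝ) < (1 + n) / (4 * c) := by positivity
    have := Real.log_le_sub_one_of_pos hx
    rw [Real.log_div (by positivity) (by positivity)] at this
    linarith
  -- log(4c) ≤ 2L
  have hlog3 : Real.log (4 * c) ≤ 2 * L := by
    have h4 : Real.log 4 ≤ L := Real.log_le_log (by norm_num) (by linarith)
    have hcL : Real.log c ≤ L := Real.log_le_log hc0 (by linarith)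
    have := Real.log_mul (by norm_num : (4:ℝ) ≠ 0) (ne_of_gt hc0)
    rw [this]; linarith
  have key : (n:ℝ) ≤ c * (Real.log (1 + n) + L) := by
    have := mul_le_mul_of_nonneg_left hlog1 (le_of_lt hc0)
    linarith
  have key2 : (n:ℝ) ≤ (1 + n) / 4 + c * (3 * L - 1) := by
    have h1 : Real.log (1 + n) ≤ (1 + n) / (4 * c) + 2 * L - 1 := by linarith
    have h2 : c * (Real.log (1 + n) + L) ≤ c * ((1 + n) / (4 * c) + 3 * L - 1) := by
      apply mul_le_mul_of_nonneg_left _ (le_of_lt hc0)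
      linarith
    have h3 : c * ((1 + n) / (4 * c) + 3 * L - 1) = (1 + n) / 4 + c * (3 * L - 1) := by
      field_simp; ring
    linarith
  have : (48:ℝ) * S * A * L = 6 * c * L := by rw [hc_def]; ring
  rw [this]
  nlinarith [mul_le_mul hc8 hL2 (by norm_num) (le_of_lt hc0)]
end

section
/- Let σ_t be defined by the fixed-point relation σ_t ≥ max{1, ψ(z_t)/2} and σ_t ≤ max{1, ψ(z_t)}, where ψ(z_t) = sup_{M,M'} [ l(M,M',z_t)/α ] / √(λ + ∑_{s=1}^T l(M,M',z_s)²/σ_s) with 0 ≤ l(M,M',z) ≤ 1 and λ, α > 0. If additionally (1/T)∑_t l(M,M',z_t)² ≥ Cov·(sup_z l(M,M',z))² for all M,M' with some Cov > 0, then max_t σ_t ≤ max{1, 1/(α²·T·Cov)}. -/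
open Real

/-- If the weights `σ t` satisfy the fixed-point sandwich
`max{1, ψ(z_t)/2} ≤ σ t ≤ max{1, ψ(z_t)}` where
`ψ(z) = sup_{M,M'} (l(M,M',z)/α) / √(λ + ∑_{s<T} l(M,M',z_s)²/σ s)` with `l ∈ [0,1]`,
and the coverage condition `(1/T) ∑_t l(M,M',z_t)² ≥ Cov · (sup_z l(M,M',z))²` holds,
then `max_t σ t ≤ max{1, 1/(α² T Cov)}`. -/
theorem stmt_17 {𝓜 Z : Type*} [Nonempty 𝓜] [Nonempty Z]
    (T : ℕ) (hT : 0 < T) (zs : ℕ → Z) (σ : ℕ → ℝ)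
    (l : 𝓜 → 𝓜 → Z → ℝ)
    (hl0 : ∀ M M' z, 0 ≤ l M M' z) (hl1 : ∀ M M' z, l M M' z ≤ 1)
    (α lam Cov : ℝ) (hα : 0 < α) (hlam : 0 < lam) (hCov : 0 < Cov)
    (ψ : Z → ℝ)
    (hψ : ∀ z, ψ z = ⨆ p : 𝓜 × 𝓜,
      (l p.1 p.2 z / α) /
        Real.sqrt (lam + ∑ s ∈ Finset.range T, (l p.1 p.2 (zs s))^2 / σ s))
    (hσlb : ∀ t < T, max 1 (ψ (zs t) / 2) ≤ σ t)
    (hσub : ∀ t < T, σ t ≤ max 1 (ψ (zs t)))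
    (hcov : ∀ M M', Cov * (⨆ z : Z, l M M' z)^2
      ≤ (1 / T : ℝ) * ∑ t ∈ Finset.range T, (l M M' (zs t))^2) :
    ∀ t < T, σ t ≤ max 1 (1 / (α^2 * T * Cov)) := by
  have hTpos : (0:ℝ) < T := Nat.cast_pos.mpr hT
  have hC : (0:ℝ) < (T:ℝ) * Cov := mul_pos hTpos hCov
  have hσ1 : ∀ t < T, (1:ℝ) ≤ σ t := fun t ht => le_trans (le_max_left _ _) (hσlb t ht)
  have hσpos : ∀ t < T, (0:ℝ) < σ t := fun t ht => lt_of_lt_of_le one_pos (hσ1 t ht)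
  have hne : (Finset.range T).Nonempty := Finset.nonempty_range_iff.mpr hT.ne'
  set B := (Finset.range T).sup' hne σ with hB
  have hBge : ∀ t < T, σ t ≤ B := fun t ht => Finset.le_sup' σ (Finset.mem_range.mpr ht)
  obtain ⟨t₀, ht₀mem, ht₀⟩ := Finset.exists_mem_eq_sup' hne σ
  have ht₀T : t₀ < T := Finset.mem_range.mp ht₀mem
  have hB1 : (1:ℝ) ≤ B := by rw [hB, ht₀]; exact hσ1 t₀ ht₀T
  have hBpos : (0:ℝ) < B := lt_of_lt_of_le one_pos hB1
  have hψbd : ∀ t < T, ψ (zs t) ≤ Real.sqrt (B / ((T:ℝ) * Cov)) / α := by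
    intro t ht
    rw [hψ]
    apply ciSup_le
    intro p
    set L := l p.1 p.2 (zs t) with hL
    set S := ∑ s ∈ Finset.range T, (l p.1 p.2 (zs s))^2 / σ s with hS
    have hL0 : 0 ≤ L := hl0 _ _ _
    have hS0 : 0 ≤ S := Finset.sum_nonneg (fun s hs =>
      div_nonneg (sq_nonneg _) (le_of_lt (hσpos s (Finset.mem_range.mp hs))))
    have hden : 0 < lam + S := by linarith
    have hSlow : (T:ℝ) * Cov * L^2 / B ≤ S := by
      have hsup : L ≤ ⨆ z : Z, l p.1 p.2 z :=
        le_ciSup ⟨1, fun x ⟨z, hz⟩ => hz ▸ hl1 _ _ _⟩ (zs t)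
      have h1 : L^2 ≤ (⨆ z : Z, l p.1 p.2 z)^2 := by gcongr
      have h2 : (T:ℝ) * Cov * L^2 ≤ ∑ s ∈ Finset.range T, (l p.1 p.2 (zs s))^2 := by
        have h3 : Cov * L^2 ≤ (1/T : ℝ) * ∑ s ∈ Finset.range T, (l p.1 p.2 (zs s))^2 :=
          le_trans (by nlinarith) (hcov p.1 p.2)
        have := mul_le_mul_of_nonneg_left h3 (le_of_lt hTpos)
        calc (T:ℝ) * Cov * L^2 = (T:ℝ) * (Cov * L^2) := by ring
          _ ≤ (T:ℝ) * ((1/T : ℝ) * ∑ s ∈ Finset.range T, (l p.1 p.2 (zs s))^2) := this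
          _ = ∑ s ∈ Finset.range T, (l p.1 p.2 (zs s))^2 := by field_simp
      have h4 : (∑ s ∈ Finset.range T, (l p.1 p.2 (zs s))^2) / B ≤ S := by
        rw [Finset.sum_div]
        apply Finset.sum_le_sum
        intro s hs
        have hsT := Finset.mem_range.mp hs
        exact div_le_div_of_nonneg_left (sq_nonneg _) (hσpos s hsT) (hBge s hsT)
      calc (T:ℝ) * Cov * L^2 / B
          ≤ (∑ s ∈ Finset.range T, (l p.1 p.2 (zs s))^2) / B := by gcongr
        _ ≤ S := h4
    have hkey : L^2 ≤ B * (lam + S) / ((T:ℝ) * Cov) := by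
      rw [div_le_iff₀ hBpos] at hSlow
      rw [le_div_iff₀ hC]
      nlinarith
    have hfrac : L / Real.sqrt (lam + S) ≤ Real.sqrt (B / ((T:ℝ) * Cov)) := by
      rw [div_le_iff₀ (Real.sqrt_pos.mpr hden), ← Real.sqrt_mul (by positivity)]
      rw [show B / ((T:ℝ)*Cov) * (lam + S) = B * (lam + S) / ((T:ℝ)*Cov) by ring]
      calc L = Real.sqrt (L^2) := (Real.sqrt_sq hL0).symm
        _ ≤ Real.sqrt (B * (lam + S) / ((T:ℝ)*Cov)) := Real.sqrt_le_sqrt hkey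
    calc (L / α) / Real.sqrt (lam + S) = (L / Real.sqrt (lam + S)) / α := by
          rw [div_div, div_div, mul_comm]
      _ ≤ Real.sqrt (B / ((T:ℝ) * Cov)) / α := by gcongr
  -- Now bound B
  have hBbound : B ≤ max 1 (1 / (α^2 * T * Cov)) := by
    rcases le_or_gt B 1 with h | h
    · exact le_trans h (le_max_left _ _)
    · have h5 : B ≤ max 1 (Real.sqrt (B / ((T:ℝ) * Cov)) / α) := by
        conv_lhs => rw [hB, ht₀]
        exact le_trans (hσub t₀ ht₀T) (by gcongr; exact hψbd t₀ ht₀T)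
      have h6 : B ≤ Real.sqrt (B / ((T:ℝ) * Cov)) / α := by
        rcases max_cases 1 (Real.sqrt (B / ((T:ℝ) * Cov)) / α) with ⟨heq, _⟩ | ⟨heq, _⟩
        · rw [heq] at h5; linarith
        · rwa [heq] at h5
      have h7 : α * B ≤ Real.sqrt (B / ((T:ℝ) * Cov)) := by
        rw [le_div_iff₀ hα, mul_comm] at h6; linarith [h6]
      have h8 : (α * B)^2 ≤ B / ((T:ℝ) * Cov) := by
        have := Real.sq_sqrt (le_of_lt (div_pos hBpos hC))
        nlinarith [Real.sqrt_nonneg (B / ((T:ℝ) * Cov)), pow_le_pow_left₀ (by positivity : (0:ℝ) ≤ α * B) h7 2]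
      have h9 : B ≤ 1 / (α^2 * T * Cov) := by
        have h8' : (α * B)^2 * ((T:ℝ) * Cov) ≤ B := (le_div_iff₀ hC).mp h8
        rw [le_div_iff₀ (by positivity)]
        nlinarith [hBpos, mul_pos hBpos hC]
      exact le_trans h9 (le_max_right _ _)
  intro t ht
  exact le_trans (hBge t ht) hBbound
end
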